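/- Minimal hypergraphs are unique up to isomorphism: if H₁ and H₂ are both obtained from H by sequences of edge-domination and node-domination rule applications, and no rule applies to H₁ or to H₂, then H₁ and H₂ are isomorphic. -/
import Mathlib


/-- A hypergraph: finite node set, finite edge set, incidence relation. -/
structure HG where
  V : Finset ℕ
  E : Finset ℕ
  I : Finset (ℕ × ℕ)

/-- Nodes incident to edge `e`. -/
def HG.Ve (H : HG) (e : ℕ) : Finset ℕ := H.V.filter (fun v => (v, e) ∈ H.I)

/-- Edges incident to node `v`. -/
def HG.Ev (H : HG) (v : ℕ) : Finset ℕ := H.E.filter (fun e => (v, e) ∈ H.I)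

/-- Remove edge `e'` (and its incidences). -/
def HG.removeEdge (H : HG) (e' : ℕ) : HG :=
  ⟨H.V, H.E.erase e', H.I.filter (fun p => p.2 ≠ e')⟩

/-- Remove node `v` (and its incidences). -/
def HG.removeNode (H : HG) (v : ℕ) : HG :=
  ⟨H.V.erase v, H.E, H.I.filter (fun p => p.1 ≠ v)⟩

/-- Edge-domination step: remove a dominating edge `e'`. -/
def EdgeStep (H H' : HG) : Prop :=
  ∃ e e', e ∈ H.E ∧ e' ∈ H.E ∧ e ≠ e' ∧ H.Ve e ⊆ H.Ve e' ∧ H' = H.removeEdge e'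

/-- Node-domination step: remove a dominated node `v`. -/
def NodeStep (H H' : HG) : Prop :=
  ∃ v v', v ∈ H.V ∧ v' ∈ H.V ∧ v ≠ v' ∧ H.Ev v ⊆ H.Ev v' ∧ H' = H.removeNode v

/-- One application of either rewrite rule. -/
def Step (H H' : HG) : Prop := EdgeStep H H' ∨ NodeStep H H'

/-- Hypergraph isomorphism. -/
def Iso (H H' : HG) : Prop :=
  ∃ f : {x // x ∈ H'.V} ≃ {x // x ∈ H.V}, ∃ g : {x // x ∈ H'.E} ≃ {x // x ∈ H.E},
    ∀ (v : {x // x ∈ H'.V}) (e : {x // x ∈ H'.E}),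
      ((v : ℕ), (e : ℕ)) ∈ H'.I ↔ ((f v : ℕ), (g e : ℕ)) ∈ H.I

/-- One rewrite step between isomorphism classes, via representatives. -/
def StepIso (H K : HG) : Prop := ∃ H' K', Iso H H' ∧ Iso K K' ∧ Step H' K'


lemma mem_Ve {H : HG} {v e : ℕ} : v ∈ H.Ve e ↔ v ∈ H.V ∧ (v, e) ∈ H.I := Finset.mem_filter

lemma mem_Ev {H : HG} {v e : ℕ} : e ∈ H.Ev v ↔ e ∈ H.E ∧ (v, e) ∈ H.I := Finset.mem_filter

lemma Ve_removeEdge {H : HG} {e e' : ℕ} (h : e ≠ e') : (H.removeEdge e').Ve e = H.Ve e := by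
  ext v; simp [mem_Ve, HG.removeEdge, h]

lemma Ev_removeEdge {H : HG} {v e' : ℕ} : (H.removeEdge e').Ev v = (H.Ev v).erase e' := by
  ext e; simp [mem_Ev, HG.removeEdge, Finset.mem_erase]; tauto

lemma Ev_removeNode {H : HG} {v v' : ℕ} (h : v ≠ v') : (H.removeNode v').Ev v = H.Ev v := by
  ext e; simp [mem_Ev, HG.removeNode, h]

lemma Ve_removeNode {H : HG} {e v' : ℕ} : (H.removeNode v').Ve e = (H.Ve e).erase v' := by
  ext v; simp [mem_Ve, HG.removeNode, Finset.mem_erase]; tauto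

lemma iso_refl (H : HG) : Iso H H :=
  ⟨Equiv.refl _, Equiv.refl _, fun _ _ => Iff.rfl⟩

lemma iso_of_eq {H H' : HG} (h : H = H') : Iso H H' := h ▸ iso_refl H

lemma iso_symm {H H' : HG} (h : Iso H H') : Iso H' H := by
  obtain ⟨f, g, hI⟩ := h
  refine ⟨f.symm, g.symm, fun v e => ?_⟩
  have := hI (f.symm v) (g.symm e)
  simpa using this.symm

lemma iso_trans {H₁ H₂ H₃ : HG} (h : Iso H₁ H₂) (h' : Iso H₂ H₃) : Iso H₁ H₃ := by
  obtain ⟨f, g, hI⟩ := h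
  obtain ⟨f', g', hI'⟩ := h'
  exact ⟨f'.trans f, g'.trans g, fun v e => (hI' v e).trans (hI (f' v) (g' e))⟩

/-- Restriction of a subtype equiv to erased finsets. -/
def eraseEquiv {E' E : Finset ℕ} (g : {x // x ∈ E'} ≃ {x // x ∈ E}) {e' : ℕ} (he' : e' ∈ E') :
    {x // x ∈ E'.erase e'} ≃ {x // x ∈ E.erase (g ⟨e', he'⟩ : ℕ)} where
  toFun x := ⟨(g ⟨x.1, Finset.mem_of_mem_erase x.2⟩ : ℕ), by
    refine Finset.mem_erase.2 ⟨?_, (g _).2⟩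
    intro hx
    have : (⟨x.1, Finset.mem_of_mem_erase x.2⟩ : {x // x ∈ E'}) = ⟨e', he'⟩ :=
      g.injective (Subtype.ext hx)
    exact Finset.ne_of_mem_erase x.2 (congrArg Subtype.val this)⟩
  invFun y := ⟨(g.symm ⟨y.1, Finset.mem_of_mem_erase y.2⟩ : ℕ), by
    refine Finset.mem_erase.2 ⟨?_, (g.symm _).2⟩
    intro hy
    apply Finset.ne_of_mem_erase y.2
    have : (⟨y.1, Finset.mem_of_mem_erase y.2⟩ : {x // x ∈ E}) = g ⟨e', he'⟩ := by
      rw [← g.apply_symm_apply ⟨y.1, Finset.mem_of_mem_erase y.2⟩]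
      exact congrArg g (Subtype.ext hy)
    exact congrArg Subtype.val this⟩
  left_inv x := by ext; simp
  right_inv y := by ext; simp

@[simp] lemma eraseEquiv_apply {E' E : Finset ℕ} (g : {x // x ∈ E'} ≃ {x // x ∈ E})
    {e' : ℕ} (he' : e' ∈ E') (x : {x // x ∈ E'.erase e'}) :
    (eraseEquiv g he' x : ℕ) = (g ⟨x.1, Finset.mem_of_mem_erase x.2⟩ : ℕ) := rfl

lemma step_measure {H H' : HG} (h : Step H H') :
    H'.V.card + H'.E.card < H.V.card + H.E.card := by
  rcases h with ⟨e, e', _, he', _, _, rfl⟩ | ⟨v, v', hv, _, _, _, rfl⟩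
  · have : (H.E.erase e').card < H.E.card := Finset.card_erase_lt_of_mem he'
    simp only [HG.removeEdge]
    omega
  · have : (H.V.erase v).card < H.V.card := Finset.card_erase_lt_of_mem hv
    simp only [HG.removeNode]
    omega

lemma removeEdge_comm (H : HG) (a b : ℕ) :
    (H.removeEdge a).removeEdge b = (H.removeEdge b).removeEdge a := by
  simp only [HG.removeEdge]
  congr 1
  · exact Finset.erase_right_comm
  · rw [Finset.filter_filter, Finset.filter_filter]
    exact Finset.filter_congr (fun x _ => by tauto)

lemma removeNode_comm (H : HG) (a b : ℕ) :
    (H.removeNode a).removeNode b = (H.removeNode b).removeNode a := by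
  simp only [HG.removeNode]
  congr 1
  · exact Finset.erase_right_comm
  · rw [Finset.filter_filter, Finset.filter_filter]
    exact Finset.filter_congr (fun x _ => by tauto)

lemma removeEdge_removeNode_comm (H : HG) (a v : ℕ) :
    (H.removeEdge a).removeNode v = (H.removeNode v).removeEdge a := by
  simp only [HG.removeEdge, HG.removeNode]
  congr 1
  rw [Finset.filter_filter, Finset.filter_filter]
  exact Finset.filter_congr (fun x _ => by tauto)

/-- Swap iso for removing either of two edges with equal vertex sets. -/
lemma iso_swap_edge {H : HG} {e₁ e₂ : ℕ} (h₁ : e₁ ∈ H.E) (h₂ : e₂ ∈ H.E)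
    (hVe : H.Ve e₁ = H.Ve e₂) :
    Iso (H.removeEdge e₁) (H.removeEdge e₂) := by
  rcases eq_or_ne e₁ e₂ with rfl | hne
  · exact iso_refl _
  have key : ∀ v, v ∈ H.V → ((v, e₁) ∈ H.I ↔ (v, e₂) ∈ H.I) := by
    intro v hv
    constructor
    · intro h; exact (mem_Ve.1 (hVe ▸ mem_Ve.2 ⟨hv, h⟩)).2
    · intro h; exact (mem_Ve.1 (hVe ▸ mem_Ve.2 ⟨hv, h⟩ : v ∈ H.Ve e₁)).2
  have hmem : ∀ a, a ∈ H.E.erase e₂ ↔ (Equiv.swap e₁ e₂) a ∈ H.E.erase e₁ := by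
    intro a
    rcases eq_or_ne a e₁ with rfl | ha1
    · simp [Equiv.swap_apply_left, Finset.mem_erase, h₁, h₂, hne, hne.symm]
    rcases eq_or_ne a e₂ with rfl | ha2
    · simp [Equiv.swap_apply_right, Finset.mem_erase]
    · simp [Equiv.swap_apply_of_ne_of_ne ha1 ha2, Finset.mem_erase, ha1, ha2]
  refine ⟨Equiv.refl _, (Equiv.swap e₁ e₂).subtypeEquiv hmem, fun v e => ?_⟩
  have hv : (v : ℕ) ∈ H.V := v.2
  have he : (e : ℕ) ∈ H.E.erase e₂ := e.2
  show ((v:ℕ), (e:ℕ)) ∈ (H.removeEdge e₂).I ↔ ((v:ℕ), Equiv.swap e₁ e₂ (e:ℕ)) ∈ (H.removeEdge e₁).I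
  simp only [HG.removeEdge, Finset.mem_filter]
  rcases eq_or_ne (e:ℕ) e₁ with he1 | ha1
  · rw [he1, Equiv.swap_apply_left]
    simp only [ne_eq]
    constructor
    · rintro ⟨h, -⟩; exact ⟨(key _ hv).1 h, fun h' => hne h'.symm⟩
    · rintro ⟨h, -⟩; exact ⟨(key _ hv).2 h, fun h' => hne (he1 ▸ h')⟩
  rcases eq_or_ne (e:ℕ) e₂ with he2 | ha2
  · exact absurd he2 (Finset.mem_erase.1 he).1
  · rw [Equiv.swap_apply_of_ne_of_ne ha1 ha2]
    simp [ha1, ha2]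

/-- Swap iso for removing either of two nodes with equal edge sets. -/
lemma iso_swap_node {H : HG} {v₁ v₂ : ℕ} (h₁ : v₁ ∈ H.V) (h₂ : v₂ ∈ H.V)
    (hEv : H.Ev v₁ = H.Ev v₂) :
    Iso (H.removeNode v₁) (H.removeNode v₂) := by
  rcases eq_or_ne v₁ v₂ with rfl | hne
  · exact iso_refl _
  have key : ∀ e, e ∈ H.E → ((v₁, e) ∈ H.I ↔ (v₂, e) ∈ H.I) := by
    intro e he
    constructor
    · intro h; exact (mem_Ev.1 (hEv ▸ mem_Ev.2 ⟨he, h⟩)).2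
    · intro h; exact (mem_Ev.1 (hEv ▸ mem_Ev.2 ⟨he, h⟩ : e ∈ H.Ev v₁)).2
  have hmem : ∀ a, a ∈ H.V.erase v₂ ↔ (Equiv.swap v₁ v₂) a ∈ H.V.erase v₁ := by
    intro a
    rcases eq_or_ne a v₁ with rfl | ha1
    · simp [Equiv.swap_apply_left, Finset.mem_erase, h₁, h₂, hne, hne.symm]
    rcases eq_or_ne a v₂ with rfl | ha2
    · simp [Equiv.swap_apply_right, Finset.mem_erase]
    · simp [Equiv.swap_apply_of_ne_of_ne ha1 ha2, Finset.mem_erase, ha1, ha2]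
  refine ⟨(Equiv.swap v₁ v₂).subtypeEquiv hmem, Equiv.refl _, fun v e => ?_⟩
  have he : (e : ℕ) ∈ H.E := e.2
  have hv : (v : ℕ) ∈ H.V.erase v₂ := v.2
  show ((v:ℕ), (e:ℕ)) ∈ (H.removeNode v₂).I ↔ (Equiv.swap v₁ v₂ (v:ℕ), (e:ℕ)) ∈ (H.removeNode v₁).I
  simp only [HG.removeNode, Finset.mem_filter]
  rcases eq_or_ne (v:ℕ) v₁ with hv1 | ha1
  · rw [hv1, Equiv.swap_apply_left]
    simp only [ne_eq]
    constructor
    · rintro ⟨h, -⟩; exact ⟨(key _ he).1 h, fun h' => hne h'.symm⟩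
    · rintro ⟨h, -⟩; exact ⟨(key _ he).2 h, fun h' => hne (hv1 ▸ h')⟩
  rcases eq_or_ne (v:ℕ) v₂ with hv2 | ha2
  · exact absurd hv2 (Finset.mem_erase.1 hv).1
  · rw [Equiv.swap_apply_of_ne_of_ne ha1 ha2]
    simp [ha1, ha2]

lemma iso_step {A B B' : HG} (hiso : Iso A B) (hstep : Step B B') :
    ∃ A', Step A A' ∧ Iso A' B' := by
  obtain ⟨f, g, hI⟩ := hiso
  rcases hstep with ⟨e, e', he, he', hne, hsub, rfl⟩ | ⟨v, v', hv, hv', hne, hsub, rfl⟩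
  · -- edge step
    refine ⟨A.removeEdge (g ⟨e', he'⟩ : ℕ), Or.inl ⟨(g ⟨e, he⟩ : ℕ), (g ⟨e', he'⟩ : ℕ),
      (g ⟨e, he⟩).2, (g ⟨e', he'⟩).2, ?_, ?_, rfl⟩, ?_⟩
    · intro h
      exact hne (congrArg Subtype.val (g.injective (Subtype.ext h)))
    · intro u hu
      rw [mem_Ve] at hu ⊢
      obtain ⟨huV, huI⟩ := hu
      set w := f.symm ⟨u, huV⟩ with hw
      have h1 := hI w ⟨e, he⟩
      have h2 := hI w ⟨e', he'⟩
      rw [hw, Equiv.apply_symm_apply] at h1 h2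
      have hwe : ((w : ℕ), e) ∈ B.I := h1.2 huI
      have : (w : ℕ) ∈ B.Ve e := mem_Ve.2 ⟨w.2, hwe⟩
      have := mem_Ve.1 (hsub this)
      exact ⟨huV, h2.1 this.2⟩
    · refine ⟨f, eraseEquiv g he', fun u x => ?_⟩
      have hx : (x : ℕ) ∈ B.E.erase e' := x.2
      have hxE : (x : ℕ) ∈ B.E := Finset.mem_of_mem_erase hx
      have hI' := hI ⟨u.1, u.2⟩ ⟨x.1, hxE⟩
      show ((u:ℕ), (x:ℕ)) ∈ (B.removeEdge e').I ↔ _ ∈ (A.removeEdge _).I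
      simp only [HG.removeEdge, Finset.mem_filter, eraseEquiv_apply]
      constructor
      · rintro ⟨h, -⟩
        refine ⟨hI'.1 h, ?_⟩
        intro hEq
        exact Finset.ne_of_mem_erase hx
          (congrArg Subtype.val (g.injective (Subtype.ext hEq)))
      · rintro ⟨h, -⟩
        exact ⟨hI'.2 h, Finset.ne_of_mem_erase hx⟩
  · -- node step
    refine ⟨A.removeNode (f ⟨v, hv⟩ : ℕ), Or.inr ⟨(f ⟨v, hv⟩ : ℕ), (f ⟨v', hv'⟩ : ℕ),
      (f ⟨v, hv⟩).2, (f ⟨v', hv'⟩).2, ?_, ?_, rfl⟩, ?_⟩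
    · intro h
      exact hne (congrArg Subtype.val (f.injective (Subtype.ext h)))
    · intro a ha
      rw [mem_Ev] at ha ⊢
      obtain ⟨haE, haI⟩ := ha
      set w := g.symm ⟨a, haE⟩ with hw
      have h1 := hI ⟨v, hv⟩ w
      have h2 := hI ⟨v', hv'⟩ w
      rw [hw, Equiv.apply_symm_apply] at h1 h2
      have hwe : (v, (w : ℕ)) ∈ B.I := h1.2 haI
      have : (w : ℕ) ∈ B.Ev v := mem_Ev.2 ⟨w.2, hwe⟩
      have := mem_Ev.1 (hsub this)
      exact ⟨haE, h2.1 this.2⟩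
    · refine ⟨eraseEquiv f hv, g, fun u x => ?_⟩
      have hu : (u : ℕ) ∈ B.V.erase v := u.2
      have huV : (u : ℕ) ∈ B.V := Finset.mem_of_mem_erase hu
      have hI' := hI ⟨u.1, huV⟩ ⟨x.1, x.2⟩
      show ((u:ℕ), (x:ℕ)) ∈ (B.removeNode v).I ↔ _ ∈ (A.removeNode _).I
      simp only [HG.removeNode, Finset.mem_filter, eraseEquiv_apply]
      constructor
      · rintro ⟨h, -⟩
        refine ⟨hI'.1 h, ?_⟩
        intro hEq
        exact Finset.ne_of_mem_erase hu
          (congrArg Subtype.val (f.injective (Subtype.ext hEq)))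
      · rintro ⟨h, -⟩
        exact ⟨hI'.2 h, Finset.ne_of_mem_erase hu⟩

lemma edge_step_after {H : HG} {e₁ e₁' e₂ e₂' : ℕ}
    (he₁ : e₁ ∈ H.E) (he₂ : e₂ ∈ H.E) (he₂' : e₂' ∈ H.E)
    (hn₁ : e₁ ≠ e₁') (hn₂ : e₂ ≠ e₂')
    (hs₁ : H.Ve e₁ ⊆ H.Ve e₁') (hs₂ : H.Ve e₂ ⊆ H.Ve e₂')
    (hne : e₁' ≠ e₂') (hok : ¬(e₂ = e₁' ∧ e₁ = e₂')) :
    Step (H.removeEdge e₁') ((H.removeEdge e₁').removeEdge e₂') := by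
  by_cases h : e₂ = e₁'
  · subst h
    have hne₁ : e₁ ≠ e₂' := fun hh => hok ⟨rfl, hh⟩
    refine Or.inl ⟨e₁, e₂', Finset.mem_erase.2 ⟨hn₁, he₁⟩,
      Finset.mem_erase.2 ⟨hne.symm, he₂'⟩, hne₁, ?_, rfl⟩
    rw [Ve_removeEdge hn₁, Ve_removeEdge hne.symm]
    exact hs₁.trans hs₂
  · refine Or.inl ⟨e₂, e₂', Finset.mem_erase.2 ⟨h, he₂⟩,
      Finset.mem_erase.2 ⟨hne.symm, he₂'⟩, hn₂, ?_, rfl⟩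
    rw [Ve_removeEdge h, Ve_removeEdge hne.symm]
    exact hs₂

lemma node_step_after {H : HG} {v₁ v₁' v₂ v₂' : ℕ}
    (hv₁' : v₁' ∈ H.V) (hv₂ : v₂ ∈ H.V) (hv₂' : v₂' ∈ H.V)
    (hn₁ : v₁ ≠ v₁') (hn₂ : v₂ ≠ v₂')
    (hs₁ : H.Ev v₁ ⊆ H.Ev v₁') (hs₂ : H.Ev v₂ ⊆ H.Ev v₂')
    (hne : v₁ ≠ v₂) (hok : ¬(v₂' = v₁ ∧ v₁' = v₂)) :
    Step (H.removeNode v₁) ((H.removeNode v₁).removeNode v₂) := by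
  by_cases h : v₂' = v₁
  · subst h
    have hne₁ : v₁' ≠ v₂ := fun hh => hok ⟨rfl, hh⟩
    refine Or.inr ⟨v₂, v₁', Finset.mem_erase.2 ⟨hne.symm, hv₂⟩,
      Finset.mem_erase.2 ⟨hn₁.symm, hv₁'⟩, hne₁.symm, ?_, rfl⟩
    rw [Ev_removeNode hne.symm, Ev_removeNode hn₁.symm]
    exact hs₂.trans hs₁
  · refine Or.inr ⟨v₂, v₂', Finset.mem_erase.2 ⟨hne.symm, hv₂⟩,
      Finset.mem_erase.2 ⟨h, hv₂'⟩, hn₂, ?_, rfl⟩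
    rw [Ev_removeNode hne.symm, Ev_removeNode h]
    exact hs₂

lemma mixed_steps {H : HG} {e e' v v' : ℕ}
    (he : e ∈ H.E) (he' : e' ∈ H.E) (hne : e ≠ e') (hsE : H.Ve e ⊆ H.Ve e')
    (hv : v ∈ H.V) (hv' : v' ∈ H.V) (hnv : v ≠ v') (hsV : H.Ev v ⊆ H.Ev v') :
    Step (H.removeEdge e') ((H.removeEdge e').removeNode v) ∧
    Step (H.removeNode v) ((H.removeEdge e').removeNode v) := by
  constructor
  · refine Or.inr ⟨v, v', hv, hv', hnv, ?_, rfl⟩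
    rw [Ev_removeEdge, Ev_removeEdge]
    exact Finset.erase_subset_erase _ hsV
  · refine Or.inl ⟨e, e', he, he', hne, ?_, removeEdge_removeNode_comm H e' v⟩
    rw [Ve_removeNode, Ve_removeNode]
    exact Finset.erase_subset_erase _ hsE

lemma loc_confl {H A B : HG} (hA : Step H A) (hB : Step H B) :
    Iso A B ∨ ∃ C, Step A C ∧ Step B C := by
  rcases hA with ⟨e₁, e₁', he₁, he₁', hn₁, hs₁, rfl⟩ | ⟨v₁, v₁', hv₁, hv₁', hn₁, hs₁, rfl⟩ <;>
    rcases hB with ⟨e₂, e₂', he₂, he₂', hn₂, hs₂, rfl⟩ | ⟨v₂, v₂', hv₂, hv₂', hn₂, hs₂, rfl⟩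
  · -- edge / edge
    rcases eq_or_ne e₁' e₂' with rfl | hne
    · exact Or.inl (iso_refl _)
    by_cases hcrit : e₂ = e₁' ∧ e₁ = e₂'
    · obtain ⟨h1, h2⟩ := hcrit
      subst h1; subst h2
      exact Or.inl (iso_swap_edge he₁' he₂' (Finset.Subset.antisymm hs₂ hs₁))
    · refine Or.inr ⟨(H.removeEdge e₁').removeEdge e₂',
        edge_step_after he₁ he₂ he₂' hn₁ hn₂ hs₁ hs₂ hne hcrit, ?_⟩
      have := edge_step_after he₂ he₁ he₁' hn₂ hn₁ hs₂ hs₁ hne.symm (by tauto)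
      rwa [removeEdge_comm] at this
  · -- edge / node
    exact Or.inr ⟨(H.removeEdge e₁').removeNode v₂,
      (mixed_steps he₁ he₁' hn₁ hs₁ hv₂ hv₂' hn₂ hs₂).1,
      (mixed_steps he₁ he₁' hn₁ hs₁ hv₂ hv₂' hn₂ hs₂).2⟩
  · -- node / edge
    exact Or.inr ⟨(H.removeEdge e₂').removeNode v₁,
      (mixed_steps he₂ he₂' hn₂ hs₂ hv₁ hv₁' hn₁ hs₁).2,
      (mixed_steps he₂ he₂' hn₂ hs₂ hv₁ hv₁' hn₁ hs₁).1⟩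
  · -- node / node
    rcases eq_or_ne v₁ v₂ with rfl | hne
    · exact Or.inl (iso_refl _)
    by_cases hcrit : v₂' = v₁ ∧ v₁' = v₂
    · obtain ⟨h1, h2⟩ := hcrit
      subst h1; subst h2
      exact Or.inl (iso_swap_node hv₁ hv₂ (Finset.Subset.antisymm
        (by simpa using hs₁) (by simpa using hs₂)))
    · refine Or.inr ⟨(H.removeNode v₁).removeNode v₂,
        node_step_after hv₁' hv₂ hv₂' hn₁ hn₂ hs₁ hs₂ hne hcrit, ?_⟩
      have := node_step_after hv₂' hv₁ hv₁' hn₂ hn₁ hs₂ hs₁ hne.symm (by tauto)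
      rwa [removeNode_comm] at this

lemma iso_rtg {A B B₁ : HG} (h : Iso A B) (hr : Relation.ReflTransGen Step B B₁) :
    ∃ A₁, Relation.ReflTransGen Step A A₁ ∧ Iso A₁ B₁ := by
  induction hr with
  | refl => exact ⟨A, Relation.ReflTransGen.refl, h⟩
  | tail hr hstep ih =>
    obtain ⟨A₁, hrA, hiso⟩ := ih
    obtain ⟨A₂, hst, hiso₂⟩ := iso_step hiso hstep
    exact ⟨A₂, hrA.tail hst, hiso₂⟩

lemma normal_iso {A B : HG} (h : Iso A B) (hn : ∀ K, ¬ Step A K) : ∀ K, ¬ Step B K :=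
  fun K hK => by
    obtain ⟨A', hst, _⟩ := iso_step h hK
    exact hn A' hst

lemma nf_exists_aux : ∀ n (H : HG), H.V.card + H.E.card ≤ n →
    ∃ N, Relation.ReflTransGen Step H N ∧ ∀ K, ¬ Step N K := by
  intro n
  induction n using Nat.strong_induction_on with
  | _ n ih =>
    intro H hn
    by_cases h : ∃ K, Step H K
    · obtain ⟨K, hK⟩ := h
      have hm := step_measure hK
      obtain ⟨N, hr, hnorm⟩ := ih (K.V.card + K.E.card) (by omega) K le_rfl
      exact ⟨N, Relation.ReflTransGen.head hK hr, hnorm⟩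
    · push_neg at h
      exact ⟨H, Relation.ReflTransGen.refl, h⟩

lemma nf_exists (H : HG) : ∃ N, Relation.ReflTransGen Step H N ∧ ∀ K, ¬ Step N K :=
  nf_exists_aux _ H le_rfl

lemma main_aux : ∀ n (H : HG), H.V.card + H.E.card ≤ n →
    ∀ H₁ H₂, Relation.ReflTransGen Step H H₁ → (∀ K, ¬ Step H₁ K) →
      Relation.ReflTransGen Step H H₂ → (∀ K, ¬ Step H₂ K) → Iso H₁ H₂ := by
  intro n
  induction n using Nat.strong_induction_on with
  | _ n ih =>
    intro H hn H₁ H₂ r₁ n₁ r₂ n₂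
    rcases r₁.cases_head with rfl | ⟨A, hA, rA⟩
    · rcases r₂.cases_head with rfl | ⟨B, hB, rB⟩
      · exact iso_refl _
      · exact absurd hB (n₁ B)
    · rcases r₂.cases_head with rfl | ⟨B, hB, rB⟩
      · exact absurd hA (n₂ A)
      · have mA := step_measure hA
        have mB := step_measure hB
        rcases loc_confl hA hB with hiso | ⟨C, hAC, hBC⟩
        · obtain ⟨H₂', rA₂, iso₂⟩ := iso_rtg hiso rB
          have n₂' : ∀ K, ¬ Step H₂' K := normal_iso (iso_symm iso₂) n₂
          have h1 : Iso H₁ H₂' :=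
            ih (A.V.card + A.E.card) (by omega) A le_rfl H₁ H₂' rA n₁ rA₂ n₂'
          exact iso_trans h1 iso₂
        · obtain ⟨N, rCN, nN⟩ := nf_exists C
          have i1 : Iso H₁ N :=
            ih (A.V.card + A.E.card) (by omega) A le_rfl H₁ N rA n₁
              (Relation.ReflTransGen.head hAC rCN) nN
          have i2 : Iso H₂ N :=
            ih (B.V.card + B.E.card) (by omega) B le_rfl H₂ N rB n₂
              (Relation.ReflTransGen.head hBC rCN) nN
          exact iso_trans i1 (iso_symm i2)

/-- Minimal hypergraphs are unique up to isomorphism. -/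
theorem minimal_unique (H H₁ H₂ : HG)
    (h₁ : Relation.ReflTransGen Step H H₁) (h₂ : Relation.ReflTransGen Step H H₂)
    (hmin₁ : ∀ H', ¬ Step H₁ H') (hmin₂ : ∀ H', ¬ Step H₂ H') :
    Iso H₁ H₂ :=
  main_aux _ H le_rfl H₁ H₂ h₁ hmin₁ h₂ hmin₂
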